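/- arXiv:1611.02741 — 2 statements merged into one kernel-verified Lean document; each statement's English description precedes it below -/
import Mathlib

section
/- For all positive reals a, b, all p ∈ [0,1], q ∈ (0,1), and any nonzero real α: max{p/q, (1-p)/(1-q)} · [(1-q)a^α + q b^α − (a^(1-q) b^q)^α] ≥ (1-p)a^α + p b^α − (a^(1-p) b^p)^α ≥ min{p/q, (1-p)/(1-q)} · [(1-q)a^α + q b^α − (a^(1-q) b^q)^α]. -/
/-!
Write `a ^ α = exp x` and `b ^ α = exp y` with `x = α log a`, `y = α log b`; then both brackets are
Jensen gaps `(1 - t) f x + t f y - f ((1 - t) x + t y)` of the convex function `f = exp`.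
For `p ≤ q` the point with weight `p` is the `p / q`-combination of `x` and the point with
weight `q`, so one more application of convexity gives `(p / q) · gap q ≤ gap p`; the bound by
`(1 - p) / (1 - q)` is the same inequality with the roles of `x` and `y` exchanged.
-/

open Real

section JensenGap

variable {E : Type*} [AddCommGroup E] [Module ℝ E]

def jensenGap (f : E → ℝ) (x y : E) (t : ℝ) : ℝ :=
  (1 - t) * f x + t * f y - f ((1 - t) • x + t • y)

theorem jensenGap_comm (f : E → ℝ) (x y : E) (t : ℝ) :
    jensenGap f x y t = jensenGap f y x (1 - t) := by
  simp only [jensenGap, sub_sub_cancel, add_comm]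

variable {s : Set E} {f : E → ℝ} {x y : E} {p q : ℝ}

theorem ConvexOn.div_mul_jensenGap_le (hf : ConvexOn ℝ s f) (hx : x ∈ s) (hy : y ∈ s)
    (hp : 0 ≤ p) (hpq : p ≤ q) (hq : q ≤ 1) :
    p / q * jensenGap f x y q ≤ jensenGap f x y p := by
  rcases hp.eq_or_lt with rfl | hp
  · simp [jensenGap]
  set r := p / q
  have hq0 : 0 < q := hp.trans_le hpq
  have hrq : r * q = p := div_mul_cancel₀ p hq0.ne'
  set z := (1 - q) • x + q • y
  have hz : z ∈ s := hf.1 hx hy (by linarith) hq0.le (by ring)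
  have hcomb : (1 - r) • x + r • z = (1 - p) • x + p • y := by
    simp only [z, smul_add, smul_smul, ← hrq]
    module
  have hconv := hf.2 hx hz (sub_nonneg.2 ((div_le_one hq0).2 hpq)) (div_nonneg hp.le hq0.le)
    (sub_add_cancel 1 r)
  rw [hcomb, smul_eq_mul, smul_eq_mul] at hconv
  simp only [jensenGap]
  linear_combination hconv + (f y - f x) * hrq

theorem ConvexOn.jensenGap_le_div_mul (hf : ConvexOn ℝ s f) (hx : x ∈ s) (hy : y ∈ s)
    (hp : 0 ≤ p) (hpq : p ≤ q) (hq : q < 1) :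
    jensenGap f x y p ≤ (1 - p) / (1 - q) * jensenGap f x y q := by
  have h := hf.div_mul_jensenGap_le hy hx (by linarith : 0 ≤ 1 - q) (by linarith : 1 - q ≤ 1 - p)
    (by linarith)
  rw [← jensenGap_comm, ← jensenGap_comm] at h
  rw [div_mul_eq_mul_div, div_le_iff₀ (by linarith)] at h
  rw [div_mul_eq_mul_div, le_div_iff₀ (by linarith)]
  linarith

theorem ConvexOn.min_mul_jensenGap_le_and_le_max_mul (hf : ConvexOn ℝ s f) (hx : x ∈ s)
    (hy : y ∈ s) (hp : p ∈ Set.Icc (0 : ℝ) 1) (hq : q ∈ Set.Ioo (0 : ℝ) 1) :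
    min (p / q) ((1 - p) / (1 - q)) * jensenGap f x y q ≤ jensenGap f x y p ∧
      jensenGap f x y p ≤ max (p / q) ((1 - p) / (1 - q)) * jensenGap f x y q := by
  obtain ⟨hp0, hp1⟩ := hp
  obtain ⟨hq0, hq1⟩ := hq
  rcases le_total p q with hpq | hqp
  · have hle : p / q ≤ (1 - p) / (1 - q) :=
      ((div_le_one hq0).2 hpq).trans ((one_le_div (by linarith)).2 (by linarith))
    rw [min_eq_left hle, max_eq_right hle]
    exact ⟨hf.div_mul_jensenGap_le hx hy hp0 hpq hq1.le, hf.jensenGap_le_div_mul hx hy hp0 hpq hq1⟩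
  · have hle : (1 - p) / (1 - q) ≤ p / q :=
      ((div_le_one (by linarith)).2 (by linarith)).trans ((one_le_div hq0).2 hqp)
    rw [min_eq_right hle, max_eq_left hle, jensenGap_comm f x y p, jensenGap_comm f x y q]
    have h₁ := hf.div_mul_jensenGap_le hy hx (p := 1 - p) (q := 1 - q) (by linarith) (by linarith)
      (by linarith)
    have h₂ := hf.jensenGap_le_div_mul hy hx (p := 1 - p) (q := 1 - q) (by linarith) (by linarith)
      (by linarith)
    rw [sub_sub_cancel, sub_sub_cancel] at h₂
    exact ⟨h₁, h₂⟩

end JensenGap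

theorem jensenGap_exp_mul_log {a b : ℝ} (ha : 0 < a) (hb : 0 < b) (α t : ℝ) :
    jensenGap exp (α * log a) (α * log b) t =
      (1 - t) * a ^ α + t * b ^ α - (a ^ (1 - t) * b ^ t) ^ α := by
  have hab : 0 < a ^ (1 - t) * b ^ t := by positivity
  rw [jensenGap, rpow_def_of_pos ha, rpow_def_of_pos hb, rpow_def_of_pos hab,
    log_mul (by positivity) (by positivity), log_rpow ha, log_rpow hb, smul_eq_mul, smul_eq_mul]
  ring_nf

theorem stmt_5_general (a b p q α : ℝ) (ha : 0 < a) (hb : 0 < b)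
    (hp : p ∈ Set.Icc (0:ℝ) 1) (hq : q ∈ Set.Ioo (0:ℝ) 1) :
    max (p / q) ((1 - p) / (1 - q)) *
        ((1 - q) * a ^ α + q * b ^ α - (a ^ (1 - q) * b ^ q) ^ α) ≥
      (1 - p) * a ^ α + p * b ^ α - (a ^ (1 - p) * b ^ p) ^ α ∧
    (1 - p) * a ^ α + p * b ^ α - (a ^ (1 - p) * b ^ p) ^ α ≥
      min (p / q) ((1 - p) / (1 - q)) *
        ((1 - q) * a ^ α + q * b ^ α - (a ^ (1 - q) * b ^ q) ^ α) := by
  simp only [← jensenGap_exp_mul_log ha hb]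
  obtain ⟨hmin, hmax⟩ :=
    convexOn_exp.min_mul_jensenGap_le_and_le_max_mul (Set.mem_univ _) (Set.mem_univ _) hp hq
  exact ⟨hmax, hmin⟩

theorem stmt_5 (a b p q α : ℝ) (ha : 0 < a) (hb : 0 < b)
    (hp : p ∈ Set.Icc (0:ℝ) 1) (hq : q ∈ Set.Ioo (0:ℝ) 1) (hα : α ≠ 0) :
    max (p / q) ((1 - p) / (1 - q)) *
        ((1 - q) * a ^ α + q * b ^ α - (a ^ (1 - q) * b ^ q) ^ α) ≥
      (1 - p) * a ^ α + p * b ^ α - (a ^ (1 - p) * b ^ p) ^ α ∧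
    (1 - p) * a ^ α + p * b ^ α - (a ^ (1 - p) * b ^ p) ^ α ≥
      min (p / q) ((1 - p) / (1 - q)) *
        ((1 - q) * a ^ α + q * b ^ α - (a ^ (1 - q) * b ^ q) ^ α) :=
  stmt_5_general a b p q α ha hb hp hq
end

section
/- Let X, Y be invertible matrices (or invertible Hilbert space operators) and ν a real number. Define the quadratic weighted geometric mean X ⓢ_ν Y := X* (|Y X⁻¹|²)^ν X, where |C|² = C*C. Then X ⓢ_ν Y = |X|² #_ν |Y|², where #_ν is the weighted geometric mean of positive definite elements. -/
/-!
Write `X = U |X|` with `U` unitary and `|X| = (X*X)^{1/2}`. Then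
`|Y X⁻¹|² = U (|X|⁻¹ |Y|² |X|⁻¹) U*`, and real powers commute with unitary conjugation, so
`X* (|Y X⁻¹|²)^ν X = |X| (|X|⁻¹ |Y|² |X|⁻¹)^ν |X| = |X|² #_ν |Y|²`.
-/

open Matrix ComplexOrder

/-- Real power of a Hermitian matrix via the spectral theorem (functional calculus);
junk value `0` for non-Hermitian matrices. -/
noncomputable def Matrix.hrpow {n : ℕ} (A : Matrix (Fin n) (Fin n) ℂ) (r : ℝ) :
    Matrix (Fin n) (Fin n) ℂ :=
  if h : A.IsHermitian then
    (h.eigenvectorUnitary : Matrix (Fin n) (Fin n) ℂ) *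
      Matrix.diagonal (fun i => ((h.eigenvalues i ^ r : ℝ) : ℂ)) *
      (h.eigenvectorUnitary : Matrix (Fin n) (Fin n) ℂ)ᴴ
  else 0

/-- Weighted geometric mean `A #_ν B` of positive definite matrices:
`A^{1/2} (A^{-1/2} B A^{-1/2})^ν A^{1/2}`. -/
noncomputable def Matrix.gmean {n : ℕ} (A B : Matrix (Fin n) (Fin n) ℂ) (ν : ℝ) :
    Matrix (Fin n) (Fin n) ℂ :=
  A.hrpow (1/2) * ((A.hrpow (-(1/2)) * B * A.hrpow (-(1/2))).hrpow ν) * A.hrpow (1/2)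

/-- Quadratic weighted geometric mean `X ⓢ_ν Y = X* (|Y X⁻¹|²)^ν X`. -/
noncomputable def Matrix.qgmean {n : ℕ} (X Y : Matrix (Fin n) (Fin n) ℂ) (ν : ℝ) :
    Matrix (Fin n) (Fin n) ℂ :=
  Xᴴ * ((Y * X⁻¹)ᴴ * (Y * X⁻¹)).hrpow ν * X

namespace Matrix

variable {n : ℕ}

lemma IsHermitian.hrpow_eq_cfc {A : Matrix (Fin n) (Fin n) ℂ} (hA : A.IsHermitian) (r : ℝ) :
    A.hrpow r = cfc (· ^ r : ℝ → ℝ) A := by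
  rw [hrpow, dif_pos hA, hA.cfc_eq]
  rfl

lemma isHermitian_hrpow (A : Matrix (Fin n) (Fin n) ℂ) (r : ℝ) : (A.hrpow r).IsHermitian := by
  by_cases hA : A.IsHermitian
  · rw [hA.hrpow_eq_cfc]
    exact cfc_predicate _ A
  · simp [hrpow, dif_neg hA]

lemma IsHermitian.hrpow_zero {A : Matrix (Fin n) (Fin n) ℂ} (hA : A.IsHermitian) :
    A.hrpow 0 = 1 := by
  simp only [hA.hrpow_eq_cfc, Real.rpow_zero]
  exact cfc_const_one ℝ A

lemma IsHermitian.hrpow_one {A : Matrix (Fin n) (Fin n) ℂ} (hA : A.IsHermitian) :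
    A.hrpow 1 = A := by
  simp only [hA.hrpow_eq_cfc, Real.rpow_one]
  exact cfc_id' ℝ A

lemma IsHermitian.hrpow_unitary_conj {A U : Matrix (Fin n) (Fin n) ℂ} (hA : A.IsHermitian)
    (hU : U ∈ unitary (Matrix (Fin n) (Fin n) ℂ)) (r : ℝ) :
    (U * A * star U).hrpow r = U * A.hrpow r * star U := by
  have hUA : (U * A * star U).IsHermitian := IsSelfAdjoint.conjugate hA U
  have hconj : Continuous (Unitary.conjStarAlgAut ℂ (Matrix (Fin n) (Fin n) ℂ) ⟨U, hU⟩) := by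
    change Continuous fun B => U * B * star U
    fun_prop
  rw [hUA.hrpow_eq_cfc, hA.hrpow_eq_cfc]
  exact (StarAlgHomClass.map_cfc (S := ℂ) _ _ A (A.finite_real_spectrum.continuousOn _) hconj).symm

lemma PosDef.hrpow_mul_hrpow {P : Matrix (Fin n) (Fin n) ℂ} (hP : P.PosDef) (a b : ℝ) :
    P.hrpow a * P.hrpow b = P.hrpow (a + b) := by
  rw [hP.1.hrpow_eq_cfc, hP.1.hrpow_eq_cfc, hP.1.hrpow_eq_cfc, ← cfc_mul _ _ P
    (P.finite_real_spectrum.continuousOn _) (P.finite_real_spectrum.continuousOn _)]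
  refine cfc_congr fun x hx => (Real.rpow_add ?_ a b).symm
  obtain ⟨i, rfl⟩ := hP.1.spectrum_real_eq_range_eigenvalues ▸ hx
  exact hP.eigenvalues_pos i

lemma PosDef.hrpow_neg_mul_hrpow {P : Matrix (Fin n) (Fin n) ℂ} (hP : P.PosDef) (r : ℝ) :
    P.hrpow (-r) * P.hrpow r = 1 := by
  rw [hP.hrpow_mul_hrpow, neg_add_cancel, hP.1.hrpow_zero]

/-- Polar decomposition `X = U |X|` of an invertible matrix. -/
lemma exists_mem_unitary_eq_mul_hrpow_half {X : Matrix (Fin n) (Fin n) ℂ} (hX : IsUnit X) :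
    ∃ U ∈ unitary (Matrix (Fin n) (Fin n) ℂ), X = U * (Xᴴ * X).hrpow (1 / 2) := by
  set P := Xᴴ * X
  have hP : P.PosDef := .conjTranspose_mul_self X (mulVec_injective_iff_isUnit.2 hX)
  set T := P.hrpow (-(1 / 2))
  have hTPT : T * P * T = 1 :=
    calc T * P * T = T * P.hrpow 1 * T := by rw [hP.1.hrpow_one]
      _ = 1 := by rw [hP.hrpow_mul_hrpow, hP.hrpow_mul_hrpow]; norm_num [hP.1.hrpow_zero]
  refine ⟨X * T, mem_unitaryGroup_iff'.2 ?_, ?_⟩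
  · rw [star_eq_conjTranspose, conjTranspose_mul, (isHermitian_hrpow P _).eq, ← hTPT]
    simp only [P, T, mul_assoc]
  · rw [mul_assoc, hP.hrpow_neg_mul_hrpow, mul_one]

lemma qgmean_unitary_mul {U S T : Matrix (Fin n) (Fin n) ℂ}
    (hU : U ∈ unitary (Matrix (Fin n) (Fin n) ℂ)) (hS : S.IsHermitian) (hT : T.IsHermitian)
    (hTS : T * S = 1) (Y : Matrix (Fin n) (Fin n) ℂ) (ν : ℝ) :
    (U * S).qgmean Y ν = S * (T * (Yᴴ * Y) * T).hrpow ν * S := by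
  have hUU : star U * U = 1 := Unitary.star_mul_self_of_mem hU
  have hinv : (U * S)⁻¹ = T * star U :=
    inv_eq_left_inv (by rw [mul_assoc, ← mul_assoc (star U), hUU, one_mul, hTS])
  have hM : (T * (Yᴴ * Y) * T).IsHermitian := by
    simpa only [hT.eq] using
      isHermitian_conjTranspose_mul_mul T (isHermitian_conjTranspose_mul_self Y)
  have hmid : (Y * (U * S)⁻¹)ᴴ * (Y * (U * S)⁻¹) = U * (T * (Yᴴ * Y) * T) * star U := by
    simp only [hinv, conjTranspose_mul, star_eq_conjTranspose, conjTranspose_conjTranspose, hT.eq,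
      mul_assoc]
  calc (U * S).qgmean Y ν
      = Sᴴ * (star U * U) * (T * (Yᴴ * Y) * T).hrpow ν * (star U * U) * S := by
        rw [qgmean, hmid, hM.hrpow_unitary_conj hU]
        simp only [conjTranspose_mul, star_eq_conjTranspose, mul_assoc]
    _ = S * (T * (Yᴴ * Y) * T).hrpow ν * S := by rw [hUU, hS.eq, mul_one, mul_one]

end Matrix

theorem stmt_14_general {n : ℕ} (X Y : Matrix (Fin n) (Fin n) ℂ)
    (hX : IsUnit X) (ν : ℝ) :
    X.qgmean Y ν = (Xᴴ * X).gmean (Yᴴ * Y) ν := by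
  have hP : (Xᴴ * X).PosDef := .conjTranspose_mul_self X (mulVec_injective_iff_isUnit.2 hX)
  obtain ⟨U, hU, hXU⟩ := exists_mem_unitary_eq_mul_hrpow_half hX
  conv_lhs => rw [hXU]
  exact qgmean_unitary_mul hU (isHermitian_hrpow _ _) (isHermitian_hrpow _ _)
    (hP.hrpow_neg_mul_hrpow _) Y ν

theorem stmt_14 {n : ℕ} (X Y : Matrix (Fin n) (Fin n) ℂ)
    (hX : IsUnit X) (hY : IsUnit Y) (ν : ℝ) :
    X.qgmean Y ν = (Xᴴ * X).gmean (Yᴴ * Y) ν :=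
  stmt_14_general X Y hX ν
end
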